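/- Fix an integer N > 1. Every mKdV tuple of subsets (S₁,…,S_N) can be transformed to the tuple (ℤ≥0,…,ℤ≥0) by a finite sequence of degree-decreasing mutations: there exist m ≥ 0 and mKdV tuples 𝐒⁰ = (S₁,…,S_N), 𝐒¹, …, 𝐒^m = (ℤ≥0,…,ℤ≥0) such that for each l < m, the tuple 𝐒^{l+1} differs from 𝐒^l in exactly one position i, and the weight of the partition associated to the new i-th entry of 𝐒^{l+1} is strictly smaller than the weight of the partition associated to the i-th entry of 𝐒^l. -/

import Mathlib

/-- A subset `S ⊆ ℤ` is of virtual cardinal zero if both `S \ ℤ≥0` and `ℤ≥0 \ S`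
are finite and have the same cardinality. -/
def VirtualCardZero (S : Set ℤ) : Prop :=
  (S \ {n : ℤ | 0 ≤ n}).Finite ∧ ({n : ℤ | 0 ≤ n} \ S).Finite ∧
    (S \ {n : ℤ | 0 ≤ n}).ncard = ({n : ℤ | 0 ≤ n} \ S).ncard

/-- The shift `S + k = {s + k : s ∈ S}` of a set of integers. -/
def shiftSet (S : Set ℤ) (k : ℤ) : Set ℤ := (fun s => s + k) '' S

/-- A KdV subset (for a fixed `N`): a subset `S ⊆ ℤ` of virtual cardinal zero
such that `S + N ⊆ S`. -/
def IsKdV (N : ℕ) (S : Set ℤ) : Prop :=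
  VirtualCardZero S ∧ shiftSet S N ⊆ S

/-- `A` is the leading term of the KdV subset `S`: `A` is an `N`-element set with
`S = A ∪ (S+N)` and `A ∩ (S+N) = ∅`. -/
def IsLeadingTerm (N : ℕ) (S : Set ℤ) (A : Finset ℤ) : Prop :=
  A.card = N ∧ (↑A : Set ℤ) ∪ shiftSet S N = S ∧ (↑A : Set ℤ) ∩ shiftSet S N = ∅

/-- The mutation `S[a] = {a+1−N} ∪ (S+1)` of a KdV subset `S` at an element `a`
of its leading term. -/
def mutate (N : ℕ) (S : Set ℤ) (a : ℤ) : Set ℤ :=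
  {a + 1 - (N : ℤ)} ∪ shiftSet S 1

/-- An mKdV tuple of subsets: an `N`-tuple `(S₁,…,S_N)` of KdV subsets with
`S_i + 1 ⊆ S_{i+1}` for `i = 1,…,N−1` and `S_N + 1 ⊆ S₁` (i.e. cyclically). -/
def IsMKdVTuple (N : ℕ) [NeZero N] (T : Fin N → Set ℤ) : Prop :=
  (∀ i, IsKdV N (T i)) ∧ ∀ i : Fin N, shiftSet (T i) 1 ⊆ T (i + 1)

/-- The increasing enumeration `s₀ < s₁ < s₂ < …` of a set `S ⊆ ℤ`, when it exists
(it exists and is unique for any set of virtual cardinal zero); junk value otherwise. -/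
noncomputable def enumOf (S : Set ℤ) : ℕ → ℤ :=
  letI := Classical.propDecidable (∃ f : ℕ → ℤ, StrictMono f ∧ Set.range f = S)
  if h : ∃ f : ℕ → ℤ, StrictMono f ∧ Set.range f = S then h.choose else fun _ => 0

/-- The weight `|λ| = ∑_i λ_i` of the partition `λ_i = i − s_i` associated to a subset
`S = {s₀ < s₁ < …} ⊆ ℤ` of virtual cardinal zero. -/
noncomputable def vczWeight (S : Set ℤ) : ℤ :=
  ∑ᶠ i : ℕ, ((i : ℤ) - enumOf S i)

/-!
For an mKdV tuple `T`, the set `T i + 1` has virtual cardinal `-1` and lies in `T (i + 1)`, so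
`T (i + 1) = {y i} ∪ (T i + 1)` for a single element `y i`. If `y i < y (i + 1)` for some `i`,
replacing `y i` by `y (i + 1) - 1` in `T (i + 1)` gives again an mKdV tuple, and it lowers the
weight of that entry by `y (i + 1) - 1 - y i > 0`: for large `n` the weight of `S` is
`∑_{k < n} k - ∑_{s ∈ S, s < n} s`. Otherwise `y` is cyclically non-increasing, hence
constant, equal to some `c`; then every `T j` is `ℤ≥c`, and virtual cardinal zero forces `c = 0`.
Weights are non-negative, so the total weight bounds the number of mutations.
-/

open Set Function Filter
open scoped symmDiff

section RelCard

variable {α : Type*}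

/-- `ncard` is `0` on infinite sets, so this is the virtual cardinal of `S` relative to `R` only
when `S ∆ R` is finite. -/
noncomputable def relCard (R S : Set α) : ℤ := (S \ R).ncard - (R \ S).ncard

lemma Set.Finite.symmDiff_trans {A B C : Set α} (hAB : (A ∆ B).Finite) (hBC : (B ∆ C).Finite) :
    (A ∆ C).Finite :=
  (hAB.union hBC).subset (symmDiff_triangle A B C)

lemma Set.Finite.sdiff_of_symmDiff {A B : Set α} (h : (A ∆ B).Finite) : (A \ B).Finite :=
  h.subset subset_union_left

lemma relCard_sub_relCard_of_subset {R A B : Set α} (hA : (A ∆ R).Finite) (hB : (B ∆ R).Finite)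
    (hBA : B ⊆ A) : relCard R A - relCard R B = (A \ B).ncard := by
  rw [symmDiff_comm] at hB
  have hAB : (A \ B).Finite := (hA.symmDiff_trans hB).sdiff_of_symmDiff
  have h1 := ncard_sdiff_add_ncard_of_subset (sdiff_subset_sdiff_left (t := R) hBA)
    hA.sdiff_of_symmDiff
  have h2 := ncard_sdiff_add_ncard_of_subset (sdiff_subset_sdiff_right (s := R) hBA)
    hB.sdiff_of_symmDiff
  have h3 := ncard_inter_add_ncard_sdiff_eq_ncard (A \ B) R hAB
  rw [show (A \ R) \ (B \ R) = (A \ B) \ R by ext; simp only [Set.mem_sdiff]; tauto] at h1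
  rw [show (R \ B) \ (R \ A) = (A \ B) ∩ R by
    ext; simp only [Set.mem_sdiff, mem_inter_iff]; tauto] at h2
  unfold relCard
  omega

lemma relCard_image {f : α → α} (hf : Injective f) (R S : Set α) :
    relCard (f '' R) (f '' S) = relCard R S := by
  simp only [relCard, ← image_sdiff hf, ncard_image_of_injective _ hf]

end RelCard

lemma mem_shiftSet {S : Set ℤ} {k x : ℤ} : x ∈ shiftSet S k ↔ x - k ∈ S := by
  constructor
  · rintro ⟨s, hs, rfl⟩
    simpa
  · intro h
    exact ⟨x - k, h, by ring⟩

lemma shiftSet_shiftSet (S : Set ℤ) (a b : ℤ) :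
    shiftSet (shiftSet S a) b = shiftSet S (a + b) := by
  ext x
  simp only [mem_shiftSet, sub_sub, add_comm b]

lemma shiftSet_mono {S S' : Set ℤ} (h : S ⊆ S') (k : ℤ) : shiftSet S k ⊆ shiftSet S' k :=
  image_mono h

lemma shiftSet_insert (S : Set ℤ) (x k : ℤ) :
    shiftSet (insert x S) k = insert (x + k) (shiftSet S k) :=
  image_insert_eq

lemma finite_Ici_symmDiff_Ici (a b : ℤ) : (Ici a ∆ Ici b).Finite :=
  (finite_Ico (min a b) (max a b)).subset fun x => by
    simp only [Set.symmDiff_def, Ici_sdiff_Ici, mem_union, mem_Ico, inf_le_iff, lt_sup_iff]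
    omega

lemma ncard_Ico_int (a b : ℤ) : (Ico a b).ncard = (b - a).toNat := by
  rw [← Finset.coe_Ico, ncard_coe_finset, Int.card_Ico]

lemma virtualCardZero_iff {S : Set ℤ} :
    VirtualCardZero S ↔ (S ∆ Ici 0).Finite ∧ relCard (Ici 0) S = 0 := by
  rw [Set.symmDiff_def, finite_union, relCard, sub_eq_zero, Nat.cast_inj]
  exact and_assoc.symm

lemma relCard_shiftSet_one {S : Set ℤ} (h : (S ∆ Ici 0).Finite) :
    (shiftSet S 1 ∆ Ici 0).Finite ∧ relCard (Ici 0) (shiftSet S 1) = relCard (Ici 0) S - 1 := by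
  have hIci : shiftSet (Ici 0) 1 = Ici 1 := by
    ext x
    simp only [mem_shiftSet, mem_Ici]
    omega
  have hshift : (shiftSet S 1 ∆ Ici 1).Finite := by
    rw [← hIci, shiftSet, shiftSet, ← image_symmDiff (add_left_injective 1)]
    exact h.image _
  have hfin := hshift.symmDiff_trans (finite_Ici_symmDiff_Ici 1 0)
  refine ⟨hfin, ?_⟩
  -- measured against `S + 1`, the reference `Ici 0` has one element more than `Ici 0 + 1`
  have hsub := relCard_sub_relCard_of_subset (R := shiftSet S 1) (by rwa [symmDiff_comm])
    (by rwa [symmDiff_comm]) (Ici_subset_Ici.2 zero_le_one)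
  have himage : relCard (shiftSet S 1) (Ici 1) = relCard S (Ici 0) := by
    rw [← hIci]
    exact relCard_image (add_left_injective 1) _ _
  rw [Ici_sdiff_Ici, ncard_Ico_int, himage] at hsub
  unfold relCard at hsub ⊢
  omega

lemma exists_eq_insert_of_shiftSet_subset {A B : Set ℤ} (hA : VirtualCardZero A)
    (hB : VirtualCardZero B) (hBA : shiftSet B 1 ⊆ A) :
    ∃ y ∉ shiftSet B 1, A = insert y (shiftSet B 1) := by
  rw [virtualCardZero_iff] at hA hB
  obtain ⟨hfin, hcard⟩ := relCard_shiftSet_one hB.1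
  have hsub := relCard_sub_relCard_of_subset hA.1 hfin hBA
  obtain ⟨y, hy⟩ := ncard_eq_one.1 (by omega : (A \ shiftSet B 1).ncard = 1)
  refine ⟨y, fun hyB => (hy.symm.subset rfl).2 hyB, ?_⟩
  rw [← singleton_union, ← hy, sdiff_union_of_subset hBA]

lemma VirtualCardZero.insert_shiftSet {B : Set ℤ} (hB : VirtualCardZero B) {x : ℤ}
    (hx : x ∉ shiftSet B 1) : VirtualCardZero (insert x (shiftSet B 1)) := by
  rw [virtualCardZero_iff] at hB ⊢
  obtain ⟨hfin, hcard⟩ := relCard_shiftSet_one hB.1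
  have hins : (insert x (shiftSet B 1) ∆ shiftSet B 1).Finite :=
    (finite_singleton x).subset fun z => by
      simp only [Set.symmDiff_def, mem_union, Set.mem_sdiff, mem_insert_iff, mem_singleton_iff]
      tauto
  have hfin' := hins.symmDiff_trans hfin
  have hsub := relCard_sub_relCard_of_subset hfin' hfin (subset_insert x _)
  rw [insert_sdiff_of_notMem _ hx, sdiff_self, insert_empty_eq, ncard_singleton] at hsub
  exact ⟨hfin', by omega⟩

lemma relCard_Ici (c : ℤ) : relCard (Ici 0) (Ici c) = -c := by
  have hzero : relCard (Ici (0 : ℤ)) (Ici 0) = 0 := by simp [relCard]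
  rcases le_total 0 c with hc | hc
  · have := relCard_sub_relCard_of_subset (finite_Ici_symmDiff_Ici 0 0)
      (finite_Ici_symmDiff_Ici c 0) (Ici_subset_Ici.2 hc)
    rw [Ici_sdiff_Ici, ncard_Ico_int, hzero] at this
    omega
  · have := relCard_sub_relCard_of_subset (finite_Ici_symmDiff_Ici c 0)
      (finite_Ici_symmDiff_Ici 0 0) (Ici_subset_Ici.2 hc)
    rw [Ici_sdiff_Ici, ncard_Ico_int, hzero] at this
    omega

lemma eq_zero_of_virtualCardZero_Ici {c : ℤ} (h : VirtualCardZero (Ici c)) : c = 0 := by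
  have := (virtualCardZero_iff.1 h).2
  rw [relCard_Ici] at this
  omega

lemma exists_strictMono_range_eq {S : Set ℤ} (hbdd : BddBelow S) (hinf : S.Infinite) :
    ∃ f : ℕ → ℤ, StrictMono f ∧ range f = S := by
  obtain ⟨b, hb⟩ := hbdd
  set g : ℕ → ℤ := fun n => n + b
  have hg : StrictMono g := fun m n hmn => by simp only [g]; omega
  have hSg : S ⊆ range g := fun s hs =>
    ⟨(s - b).toNat, by have := hb hs; simp only [g]; omega⟩
  have hP : (g ⁻¹' S).Infinite := hinf.preimage hSg
  refine ⟨g ∘ Nat.nth (· ∈ g ⁻¹' S), hg.comp (Nat.nth_strictMono hP), ?_⟩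
  rw [range_comp, Nat.range_nth_of_infinite (p := (· ∈ g ⁻¹' S)) hP]
  exact image_preimage_eq_of_subset hSg

lemma StrictMono.image_Iio_eq {α β : Type*} [LinearOrder α] [Preorder β] {f : α → β}
    (hf : StrictMono f) (a : α) : f '' Iio a = range f ∩ Iio (f a) := by
  ext y
  constructor
  · rintro ⟨x, hx, rfl⟩
    exact ⟨mem_range_self x, hf hx⟩
  · rintro ⟨⟨x, rfl⟩, hx⟩
    exact ⟨x, hf.lt_iff_lt.1 hx, rfl⟩

namespace VirtualCardZero

variable {S : Set ℤ}

lemma ncard_inter_Iio (h : VirtualCardZero S) {n : ℤ} (hn : Ici n ⊆ S) :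
    ((S ∩ Iio n).ncard : ℤ) = n := by
  have hS := virtualCardZero_iff.1 h
  have := relCard_sub_relCard_of_subset hS.1 (finite_Ici_symmDiff_Ici n 0) hn
  rw [hS.2, relCard_Ici, show S \ Ici n = S ∩ Iio n by ext; simp] at this
  omega

lemma eventually_Ici_subset (h : VirtualCardZero S) :
    ∀ᶠ n : ℕ in atTop, Ici (n : ℤ) ⊆ S := by
  obtain ⟨b, hb⟩ := h.2.1.bddAbove
  refine eventually_atTop.2 ⟨b.toNat + 1, fun n hn m hm => ?_⟩
  rw [mem_Ici] at hm
  by_contra hmS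
  have := hb ⟨(by omega : (0 : ℤ) ≤ m), hmS⟩
  omega

lemma bddBelow (h : VirtualCardZero S) : BddBelow S := by
  obtain ⟨b, hb⟩ := h.1.bddBelow
  refine ⟨min b 0, fun s hs => ?_⟩
  by_cases h0 : 0 ≤ s
  · exact min_le_of_right_le h0
  · exact min_le_of_left_le (hb ⟨hs, h0⟩)

lemma strictMono_enumOf_and_range (h : VirtualCardZero S) :
    StrictMono (enumOf S) ∧ range (enumOf S) = S := by
  have hinf : S.Infinite := fun hfin =>
    (Ici_infinite (0 : ℤ)) ((hfin.union h.2.1).subset fun n hn => by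
      by_cases hnS : n ∈ S
      · exact Or.inl hnS
      · exact Or.inr ⟨hn, hnS⟩)
  have hex := exists_strictMono_range_eq h.bddBelow hinf
  rw [enumOf, dif_pos hex]
  exact hex.choose_spec

lemma enumOf_eventually_eq (h : VirtualCardZero S) : ∀ᶠ n : ℕ in atTop, enumOf S n = n := by
  obtain ⟨hf, hrange⟩ := h.strictMono_enumOf_and_range
  filter_upwards [h.eventually_Ici_subset] with n hn
  obtain ⟨j, hj⟩ : (n : ℤ) ∈ range (enumOf S) := by
    rw [hrange]
    exact hn (mem_Ici.2 le_rfl)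
  have himage : enumOf S '' Iio j = S ∩ Iio (n : ℤ) := by rw [hf.image_Iio_eq, hrange, hj]
  have hcard := h.ncard_inter_Iio hn
  rw [← himage, ncard_image_of_injective _ hf.injective, ncard_Iio_nat, Nat.cast_inj] at hcard
  subst hcard
  exact hj

lemma enumOf_le (h : VirtualCardZero S) (i : ℕ) : enumOf S i ≤ i := by
  obtain ⟨hf, -⟩ := h.strictMono_enumOf_and_range
  have hmono : Monotone fun k : ℕ => enumOf S k - k :=
    monotone_nat_of_le_succ fun k => by have := hf (Nat.lt_add_one k); push_cast; omega
  obtain ⟨n, hn, hin⟩ := (h.enumOf_eventually_eq.and (eventually_ge_atTop i)).exists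
  have := hmono hin
  simp only [hn, sub_self] at this
  omega

lemma vczWeight_nonneg (h : VirtualCardZero S) : 0 ≤ vczWeight S :=
  finsum_nonneg fun i => sub_nonneg.2 (h.enumOf_le i)

lemma eventually_vczWeight_eq (h : VirtualCardZero S) :
    ∀ᶠ n : ℕ in atTop, ∃ A : Finset ℤ, (A : Set ℤ) = S ∩ Iio (n : ℤ) ∧
      vczWeight S = ∑ i ∈ Finset.range n, (i : ℤ) - ∑ a ∈ A, a := by
  obtain ⟨hf, hrange⟩ := h.strictMono_enumOf_and_range
  obtain ⟨M, hM⟩ := eventually_atTop.1 h.enumOf_eventually_eq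
  filter_upwards [eventually_ge_atTop M] with n hn
  refine ⟨(Finset.range n).image (enumOf S), ?_, ?_⟩
  · rw [Finset.coe_image, Finset.coe_range, hf.image_Iio_eq, hrange, hM n hn]
  · have hsupp : support (fun i : ℕ => (i : ℤ) - enumOf S i) ⊆ Finset.range n := by
      intro i hi
      by_contra hin
      simp only [Finset.coe_range, mem_Iio, not_lt] at hin
      exact hi (by simp only [hM i (hn.trans hin), sub_self])
    rw [vczWeight, finsum_eq_sum_of_support_subset _ hsupp, Finset.sum_sub_distrib,
      Finset.sum_image fun _ _ _ _ hij => hf.injective hij]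

end VirtualCardZero

lemma vczWeight_insert_eq {B : Set ℤ} {x x' : ℤ} (hx : x ∉ B) (hx' : x' ∉ B)
    (h : VirtualCardZero (insert x B)) (h' : VirtualCardZero (insert x' B)) :
    vczWeight (insert x' B) = vczWeight (insert x B) + x - x' := by
  classical
  obtain ⟨n, ⟨A, hA, hw⟩, ⟨A', hA', hw'⟩, hxn, hx'n⟩ :=
    (h.eventually_vczWeight_eq.and (h'.eventually_vczWeight_eq.and
      ((eventually_gt_atTop x.toNat).and (eventually_gt_atTop x'.toNat)))).exists
  have hxA : x ∈ A := by
    rw [← Finset.mem_coe, hA]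
    exact ⟨mem_insert x B, by simp only [mem_Iio]; omega⟩
  have hx'A : x' ∉ A.erase x := by
    rw [← Finset.mem_coe, Finset.coe_erase, hA]
    rintro ⟨⟨rfl | hB, -⟩, hne⟩
    exacts [hne rfl, hx' hB]
  have hA'eq : A' = insert x' (A.erase x) := by
    apply Finset.coe_injective
    rw [Finset.coe_insert, Finset.coe_erase, hA, hA']
    ext z
    simp only [mem_insert_iff, mem_inter_iff, mem_Iio, Set.mem_sdiff, mem_singleton_iff]
    constructor
    · rintro ⟨rfl | hz, hzn⟩
      · exact Or.inl rfl
      · exact Or.inr ⟨⟨Or.inr hz, hzn⟩, fun hzx => hx (hzx ▸ hz)⟩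
    · rintro (rfl | ⟨⟨rfl | hz, hzn⟩, hzx⟩)
      exacts [⟨Or.inl rfl, by omega⟩, absurd rfl hzx, ⟨Or.inr hz, hzn⟩]
  rw [hw', hw, hA'eq, Finset.sum_insert hx'A, Finset.sum_erase_eq_sub hxA]
  ring

open scoped Fin.NatCast in
lemma Fin.apply_le_apply_of_forall_add_one_le {α : Type*} [Preorder α] {N : ℕ} [NeZero N]
    {y : Fin N → α} (hy : ∀ i, y (i + 1) ≤ y i) (i j : Fin N) : y j ≤ y i := by
  have key : ∀ k : ℕ, y (i + k) ≤ y i := by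
    intro k
    induction k with
    | zero => simp
    | succ k ih =>
      rw [Nat.cast_succ, ← add_assoc]
      exact (hy _).trans ih
  simpa [Fin.cast_val_eq_self] using key (j - i).val

lemma Relation.ReflTransGen.exists_seq {α : Type*} {r : α → α → Prop} {a b : α}
    (h : Relation.ReflTransGen r a b) :
    ∃ (m : ℕ) (C : ℕ → α), C 0 = a ∧ C m = b ∧ ∀ l < m, r (C l) (C (l + 1)) := by
  induction h using Relation.ReflTransGen.head_induction_on with
  | refl => exact ⟨0, fun _ => b, rfl, rfl, fun l hl => absurd hl (Nat.not_lt_zero l)⟩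
  | @head a c hac _ ih =>
    obtain ⟨m, C, h0, hm, hstep⟩ := ih
    refine ⟨m + 1, fun | 0 => a | l + 1 => C l, rfl, hm, fun l hl => ?_⟩
    cases l with
    | zero =>
      show r a (C 0)
      rwa [h0]
    | succ l => exact hstep l (by omega)

section CyclicFamily

variable {N : ℕ} [NeZero N] {T : Fin N → Set ℤ} {c : ℤ}

lemma Ici_subset_of_eq_insert_shiftSet (hTc : ∀ j, T j = insert c (shiftSet (T (j - 1)) 1))
    (j : Fin N) : Ici c ⊆ T j := by
  suffices ∀ k : ℕ, ∀ j, c + k ∈ T j by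
    intro t ht
    rw [mem_Ici] at ht
    obtain ⟨k, rfl⟩ : ∃ k : ℕ, t = c + k := ⟨(t - c).toNat, by omega⟩
    exact this k j
  intro k
  induction k with
  | zero => intro j; rw [hTc j]; simp
  | succ k ih =>
    intro j
    rw [hTc j]
    refine mem_insert_of_mem _ (mem_shiftSet.2 ?_)
    convert ih (j - 1) using 1
    push_cast
    ring

lemma subset_Ici_of_eq_insert_shiftSet (hbdd : ∀ j, BddBelow (T j))
    (hTc : ∀ j, T j = insert c (shiftSet (T (j - 1)) 1)) (j : Fin N) : T j ⊆ Ici c := by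
  set U := ⋃ j ∈ (univ : Set (Fin N)), T j
  obtain ⟨b, hb⟩ : BddBelow U := (finite_univ.bddBelow_biUnion).2 fun j _ => hbdd j
  obtain ⟨m, hm, hmin⟩ := Int.exists_least_of_bdd (P := (· ∈ U)) ⟨b, fun z hz => hb hz⟩
    ⟨c, mem_biUnion (mem_univ 0) (Ici_subset_of_eq_insert_shiftSet hTc 0 (mem_Ici.2 le_rfl))⟩
  -- the least element `m` of `U` is `c`: any other element of `U` has its predecessor in `U`
  intro t ht
  have hmt : m ≤ t := hmin t (mem_biUnion (mem_univ j) ht)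
  obtain ⟨j', -, hmj'⟩ := mem_iUnion₂.1 hm
  rw [hTc j'] at hmj'
  rcases hmj' with hmc | hmj'
  · rw [mem_Ici]
    omega
  · have := hmin _ (mem_biUnion (mem_univ (j' - 1)) (mem_shiftSet.1 hmj'))
    omega

end CyclicFamily

def IsDecreasingMutation (N : ℕ) [NeZero N] (T T' : Fin N → Set ℤ) : Prop :=
  IsMKdVTuple N T' ∧ ∃ i : Fin N, (∀ j : Fin N, j ≠ i → T' j = T j) ∧ T' i ≠ T i ∧
    vczWeight (T' i) < vczWeight (T i)

lemma IsDecreasingMutation.sum_vczWeight_lt {N : ℕ} [NeZero N] {T T' : Fin N → Set ℤ}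
    (h : IsDecreasingMutation N T T') : ∑ j, vczWeight (T' j) < ∑ j, vczWeight (T j) := by
  classical
  obtain ⟨-, i, hj, -, hlt⟩ := h
  have hrest : ∑ j ∈ Finset.univ.erase i, vczWeight (T' j) =
      ∑ j ∈ Finset.univ.erase i, vczWeight (T j) :=
    Finset.sum_congr rfl fun j hj' => by rw [hj j (Finset.ne_of_mem_erase hj')]
  rw [← Finset.add_sum_erase _ _ (Finset.mem_univ i),
    ← Finset.add_sum_erase _ _ (Finset.mem_univ i), hrest]
  linarith

namespace IsMKdVTuple

variable {N : ℕ} [NeZero N] {T : Fin N → Set ℤ}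

open scoped Fin.NatCast in
lemma shiftSet_subset (hT : IsMKdVTuple N T) (i : Fin N) (k : ℕ) :
    shiftSet (T i) k ⊆ T (i + k) := by
  induction k with
  | zero => simp [shiftSet]
  | succ k ih =>
    rw [Nat.cast_succ, Nat.cast_succ, ← add_assoc, ← shiftSet_shiftSet]
    exact (shiftSet_mono ih 1).trans (hT.2 _)

lemma exists_eq_insert (hT : IsMKdVTuple N T) (i : Fin N) :
    ∃ y ∉ shiftSet (T i) 1, T (i + 1) = insert y (shiftSet (T i) 1) :=
  exists_eq_insert_of_shiftSet_subset (hT.1 _).1 (hT.1 i).1 (hT.2 i)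

lemma update (hT : IsMKdVTuple N T) (hN : 1 < N) {i : Fin N} {S : Set ℤ} (hS : IsKdV N S)
    (hprev : shiftSet (T (i - 1)) 1 ⊆ S) (hnext : shiftSet S 1 ⊆ T (i + 1)) :
    IsMKdVTuple N (update T i S) := by
  have hsucc : ∀ j : Fin N, j + 1 ≠ j := fun j h => by
    have := congrArg Fin.val (add_eq_left.1 h)
    simp [Nat.mod_eq_of_lt hN] at this
  refine ⟨fun j => ?_, fun j => ?_⟩
  · rcases eq_or_ne j i with rfl | hj
    · rwa [update_self]
    · rw [update_of_ne hj]
      exact hT.1 j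
  · rcases eq_or_ne j i with rfl | hj
    · rwa [update_self, update_of_ne (hsucc j)]
    · rcases eq_or_ne (j + 1) i with rfl | hj'
      · rw [update_of_ne hj, update_self]
        simpa using hprev
      · rw [update_of_ne hj, update_of_ne hj']
        exact hT.2 j

open scoped Fin.NatCast Fin.CommRing in
lemma isKdV_insert_shiftSet (hT : IsMKdVTuple N T) (hN : 1 < N) {i : Fin N} {z : ℤ}
    (hz : z ∈ T (i + 1 + 1)) (hzB : z - 1 ∉ shiftSet (T i) 1) :
    IsKdV N (insert (z - 1) (shiftSet (T i) 1)) := by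
  refine ⟨(hT.1 i).1.insert_shiftSet hzB, ?_⟩
  have hwrap : i + 1 + 1 + ((N - 2 : ℕ) : Fin N) = i := by
    rw [Nat.cast_sub hN, Fin.natCast_self]
    ring
  have hzN : z + ((N - 2 : ℕ) : ℤ) ∈ T i := by
    rw [← hwrap]
    exact hT.shiftSet_subset _ _ (mem_shiftSet.2 (by simpa using hz))
  rw [shiftSet_insert]
  refine insert_subset (mem_insert_of_mem _ (mem_shiftSet.2 ?_)) ?_
  · convert hzN using 1
    rw [Nat.cast_sub (show 2 ≤ N from hN)]
    push_cast
    ring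
  · rw [shiftSet_shiftSet, add_comm, ← shiftSet_shiftSet]
    exact (shiftSet_mono (hT.1 i).2 1).trans (subset_insert _ _)

lemma exists_isDecreasingMutation_of_lt (hT : IsMKdVTuple N T) (hN : 1 < N) {i : Fin N} {x z : ℤ}
    (hx : x ∉ shiftSet (T i) 1) (hTx : T (i + 1) = insert x (shiftSet (T i) 1))
    (hz : z ∉ shiftSet (T (i + 1)) 1) (hzT : z ∈ T (i + 1 + 1)) (hxz : x < z) :
    ∃ T', IsDecreasingMutation N T T' := by
  set B := shiftSet (T i) 1
  have hBshift : shiftSet B 1 ⊆ shiftSet (T (i + 1)) 1 := shiftSet_mono (hT.2 i) 1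
  have hzB : z - 1 ∉ B := fun h => hz (hBshift (mem_shiftSet.2 (by simpa using h)))
  have hxT : x ∈ T (i + 1) := hTx ▸ mem_insert x B
  have hxz' : x ≠ z - 1 := fun h => hz (mem_shiftSet.2 (by rwa [← h]))
  have hS := hT.isKdV_insert_shiftSet hN hzT hzB
  refine ⟨Function.update T (i + 1) (insert (z - 1) B), hT.update hN hS ?_ ?_, i + 1,
    fun j hj => update_of_ne hj _ _, ?_, ?_⟩
  · rw [add_sub_cancel_right]
    exact subset_insert _ _
  · rw [shiftSet_insert, sub_add_cancel]
    exact insert_subset hzT (hBshift.trans (hT.2 _))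
  · rw [update_self]
    intro h
    rcases (h ▸ hxT : x ∈ insert (z - 1) B) with h' | h'
    exacts [hxz' h', hx h']
  · rw [update_self, vczWeight_insert_eq hx hzB (hTx ▸ (hT.1 (i + 1)).1) hS.1, hTx]
    omega

lemma eq_Ici_zero_of_forall_le (hT : IsMKdVTuple N T) {y : Fin N → ℤ}
    (hTy : ∀ i, T (i + 1) = insert (y i) (shiftSet (T i) 1)) (hy : ∀ i, y (i + 1) ≤ y i) :
    T = fun _ => Ici 0 := by
  have hTc : ∀ j, T j = insert (y 0) (shiftSet (T (j - 1)) 1) := fun j => by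
    have hyc : y (j - 1) = y 0 := le_antisymm (Fin.apply_le_apply_of_forall_add_one_le hy 0 _)
      (Fin.apply_le_apply_of_forall_add_one_le hy _ 0)
    rw [← hyc, ← hTy, sub_add_cancel]
  have hTeq : ∀ j, T j = Ici (y 0) := fun j =>
    (subset_Ici_of_eq_insert_shiftSet (fun j => (hT.1 j).1.bddBelow) hTc j).antisymm
      (Ici_subset_of_eq_insert_shiftSet hTc j)
  have hc : y 0 = 0 := eq_zero_of_virtualCardZero_Ici (hTeq 0 ▸ (hT.1 0).1)
  funext j
  rw [hTeq j, hc]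

lemma exists_isDecreasingMutation (hT : IsMKdVTuple N T) (hN : 1 < N)
    (hne : T ≠ fun _ => Ici 0) :
    ∃ T', IsDecreasingMutation N T T' := by
  choose y hy hTy using hT.exists_eq_insert
  by_cases hlt : ∃ i, y i < y (i + 1)
  · obtain ⟨i, hi⟩ := hlt
    exact hT.exists_isDecreasingMutation_of_lt hN (hy i) (hTy i) (hy (i + 1))
      (hTy (i + 1) ▸ mem_insert _ _) hi
  · simp only [not_exists, not_lt] at hlt
    exact absurd (hT.eq_Ici_zero_of_forall_le hTy hlt) hne

lemma reflTransGen_isDecreasingMutation (hT : IsMKdVTuple N T) (hN : 1 < N) :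
    Relation.ReflTransGen (IsDecreasingMutation N) T fun _ => Ici 0 := by
  induction hw : (∑ j, vczWeight (T j)).toNat using Nat.strong_induction_on generalizing T with
  | _ n ih =>
    by_cases hne : T = fun _ => Ici 0
    · rw [hne]
    · obtain ⟨T', hstep⟩ := hT.exists_isDecreasingMutation hN hne
      have hlt := hstep.sum_vczWeight_lt
      have hnonneg : 0 ≤ ∑ j, vczWeight (T' j) :=
        Finset.sum_nonneg fun j _ => (hstep.1.1 j).1.vczWeight_nonneg
      exact .head hstep (ih _ (by omega) hstep.1 rfl)

end IsMKdVTuple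

/-- Fix `N > 1`.  Every mKdV tuple of subsets can be transformed to
the tuple `(ℤ≥0,…,ℤ≥0)` by a finite sequence of degree-decreasing mutations: there are
`m ≥ 0` and mKdV tuples `𝐒⁰ = (S₁,…,S_N), 𝐒¹, …, 𝐒^m = (ℤ≥0,…,ℤ≥0)` such that for each
`l < m`, the tuple `𝐒^{l+1}` differs from `𝐒^l` in exactly one position `i`, and the
weight of the partition associated to the new `i`-th entry is strictly smaller than the
weight of the partition associated to the old `i`-th entry. -/
theorem mkdv_degree_decreasing_mutations (N : ℕ) [NeZero N] (hN : 1 < N)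
    (T : Fin N → Set ℤ) (hT : IsMKdVTuple N T) :
    ∃ (m : ℕ) (C : ℕ → Fin N → Set ℤ),
      C 0 = T ∧ C m = (fun _ => {n : ℤ | 0 ≤ n}) ∧
      (∀ l ≤ m, IsMKdVTuple N (C l)) ∧
      ∀ l < m, ∃ i : Fin N,
        (∀ j : Fin N, j ≠ i → C (l + 1) j = C l j) ∧
        C (l + 1) i ≠ C l i ∧
        vczWeight (C (l + 1) i) < vczWeight (C l i) := by
  obtain ⟨m, C, h0, hm, hstep⟩ := (hT.reflTransGen_isDecreasingMutation hN).exists_seq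
  refine ⟨m, C, h0, hm, fun l hl => ?_, fun l hl => (hstep l hl).2⟩
  cases l with
  | zero => exact h0 ▸ hT
  | succ l => exact (hstep l (by omega)).1
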